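/- arXiv:1603.08639 — 2 statements merged into one kernel-verified Lean document; each statement's English description precedes it below -/
import Mathlib

section
/- Let f₀ : [-1,1] → [-1,1] be the C^∞ map satisfying f₀(x) = 1 + 2x for x ∈ [-1, -1/3], f₀(x) = 1 - 2x for x ∈ [1/3, 1], and f₀(x) = 1 - 2^{-k}(1+x) for x ∈ [x_k, x'_k], where x_k = δ/(2k+1), x'_k = δ/(2k), 0 < δ < 1/4, k ≥ 1. Then for every k ≥ 1 and every x ∈ [x_k, x'_k], we have f₀^{k+1}(x) = x; that is, every point of [x_k, x'_k] is periodic with period dividing k+1. -/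
/-- for the model map `f₀` (with `f₀ = 1 + 2x` on `[-1,-1/3]`,
`f₀ = 1 - 2x` on `[1/3,1]`, `f₀ = 1 - 2^{-k}(1+x)` on `[x_k, x'_k]` where
`x_k = δ/(2k+1)`, `x'_k = δ/(2k)`, `0 < δ < 1/4`), every point of `[x_k, x'_k]`
satisfies `f₀^{k+1}(x) = x`. -/
theorem stmt10 (δ : ℝ) (hδ : 0 < δ) (hδ' : δ < 1/4)
    (f₀ : ℝ → ℝ) (hsmooth : ContDiff ℝ (⊤ : ℕ∞) f₀)
    (h1 : ∀ x ∈ Set.Icc (-1:ℝ) (-1/3), f₀ x = 1 + 2 * x)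
    (h2 : ∀ x ∈ Set.Icc (1/3:ℝ) 1, f₀ x = 1 - 2 * x)
    (h3 : ∀ k : ℕ, 1 ≤ k →
      ∀ x ∈ Set.Icc (δ / (2 * (k:ℝ) + 1)) (δ / (2 * (k:ℝ))),
        f₀ x = 1 - (2:ℝ) ^ (-(k:ℤ)) * (1 + x)) :
    ∀ k : ℕ, 1 ≤ k →
      ∀ x ∈ Set.Icc (δ / (2 * (k:ℝ) + 1)) (δ / (2 * (k:ℝ))),
        f₀^[k + 1] x = x := by
  intro k hk x hx
  obtain ⟨m, rfl⟩ : ∃ m, k = m + 1 := ⟨k - 1, (Nat.succ_pred_eq_of_pos hk).symm⟩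
  -- bounds on x
  have hden : (0:ℝ) < 2 * ((m:ℝ) + 1) + 1 := by positivity
  have hx0 : 0 < x := by
    refine lt_of_lt_of_le ?_ hx.1
    push_cast
    positivity
  have hx8 : x ≤ 1 / 8 := by
    have h2le : (2:ℝ) ≤ 2 * ((m + 1 : ℕ) : ℝ) := by
      push_cast; nlinarith [Nat.cast_nonneg (α := ℝ) m]
    have := hx.2
    have hle : δ / (2 * ((m + 1 : ℕ) : ℝ)) ≤ δ / 2 :=
      div_le_div_of_nonneg_left hδ.le (by norm_num) h2le
    linarith
  -- key iteration lemma: applying f₀ n times to 2^{-n}(1+x) - 1 gives x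
  have aux : ∀ n : ℕ, f₀^[n] ((2:ℝ) ^ (-(n:ℤ)) * (1 + x) - 1) = x := by
    intro n
    induction n with
    | zero => simp
    | succ n ih =>
      have hpow_le : (2:ℝ) ^ (-((n:ℤ) + 1)) ≤ 1 / 2 := by
        have h1le : ((2:ℝ) ^ (n + 1))⁻¹ ≤ ((2:ℝ) ^ 1)⁻¹ := by
          apply inv_anti₀ (by norm_num)
          exact pow_le_pow_right₀ (by norm_num) (by omega)
        calc (2:ℝ) ^ (-((n:ℤ) + 1)) = ((2:ℝ) ^ (n + 1))⁻¹ := by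
              rw [zpow_neg]
              norm_cast
          _ ≤ 1 / 2 := by simpa using h1le
      have hpow_pos : (0:ℝ) < (2:ℝ) ^ (-((n:ℤ) + 1)) := by positivity
      have hy : (2:ℝ) ^ (-(((n:ℕ) + 1 : ℕ):ℤ)) * (1 + x) - 1 ∈ Set.Icc (-1:ℝ) (-1/3) := by
        have hc : (-(((n:ℕ) + 1 : ℕ):ℤ)) = -((n:ℤ) + 1) := by push_cast; ring
        rw [hc]
        constructor
        · nlinarith
        · nlinarith
      rw [Function.iterate_succ_apply, h1 _ hy]
      have hsplit : (2:ℝ) ^ (-(n:ℤ)) = 2 * (2:ℝ) ^ (-(((n:ℕ) + 1 : ℕ):ℤ)) := by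
        have hc : (-(((n:ℕ) + 1 : ℕ):ℤ)) = -((n:ℤ) + 1) := by push_cast; ring
        rw [hc, show (-((n:ℤ)+1)) = (-(n:ℤ)) + (-1) by ring, zpow_add₀ (two_ne_zero)]
        simp
        ring
      have : 1 + 2 * ((2:ℝ) ^ (-(((n:ℕ) + 1 : ℕ):ℤ)) * (1 + x) - 1)
          = (2:ℝ) ^ (-(n:ℤ)) * (1 + x) - 1 := by
        rw [hsplit]; ring
      rw [this, ih]
  -- first application
  have hf1 : f₀ x = 1 - (2:ℝ) ^ (-((m + 1 : ℕ):ℤ)) * (1 + x) :=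
    h3 (m + 1) (by omega) x hx
  have hpow_le : (2:ℝ) ^ (-((m + 1 : ℕ):ℤ)) ≤ 1 / 2 := by
    have h1le : ((2:ℝ) ^ (m + 1))⁻¹ ≤ ((2:ℝ) ^ 1)⁻¹ := by
      apply inv_anti₀ (by norm_num)
      exact pow_le_pow_right₀ (by norm_num) (by omega)
    calc (2:ℝ) ^ (-((m + 1 : ℕ):ℤ)) = ((2:ℝ) ^ (m + 1))⁻¹ := by
          rw [zpow_neg]
          norm_cast
      _ ≤ 1 / 2 := by simpa using h1le
  have hpow_pos : (0:ℝ) < (2:ℝ) ^ (-((m + 1 : ℕ):ℤ)) := by positivity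
  have hf1mem : f₀ x ∈ Set.Icc (1/3:ℝ) 1 := by
    rw [hf1]
    constructor
    · nlinarith
    · nlinarith
  have hf2 : f₀ (f₀ x) = (2:ℝ) ^ (-(m:ℤ)) * (1 + x) - 1 := by
    rw [h2 _ hf1mem, hf1]
    have hsplit : (2:ℝ) ^ (-(m:ℤ)) = 2 * (2:ℝ) ^ (-((m + 1 : ℕ):ℤ)) := by
      have hc : (-((m + 1 : ℕ):ℤ)) = -((m:ℤ) + 1) := by push_cast; ring
      rw [hc, show (-((m:ℤ)+1)) = (-(m:ℤ)) + (-1) by ring, zpow_add₀ (two_ne_zero)]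
      simp
      ring
    rw [hsplit]; ring
  show f₀^[m + 1 + 1] x = x
  rw [show m + 1 + 1 = m + 2 from rfl, Function.iterate_succ_apply,
    Function.iterate_succ_apply, hf2, aux m]
end

section
/- Let F : S¹ × (-δ,δ) → S¹ × ℝ be a C¹ area-preserving map with F(x, 0) = (x + θ, 0) for all x ∈ S¹, where θ = p/N is rational in lowest terms, and suppose the twist condition ∂/∂y[P_x ∘ F](x,0) > 0 holds for all x ∈ S¹. Let G^t(x,y) = (x, y + h'(x)t) for a C^∞ function h : S¹ → ℝ, and let x₀ ∈ S¹ be a point with h'(x₀ + jθ) = 0 for j = 0,…,N-1, h''(x₀) = ε ∈ {+1,-1}, and h''(x₀ + jθ) = 0 for j = 1,…,N-1. Then for each t, the orbit {(x₀ + jθ, 0) : j = 0,…,N-1} is a periodic orbit of F ∘ G^t of period N, and tr D(F ∘ G^t)^N at (x₀, 0) equals tr DF^N_{(x₀,0)} + ε t · ∂/∂y[P_x ∘ F^N](x₀, 0) = 2 + ε t · b where b = ∂/∂y[P_x ∘ F^N](x₀,0) > 0. -/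
/-- perturbation of a resonant invariant circle. `F` is (the lift of) a C¹
area-preserving map of `S¹ × (-δ,δ)` with `F(x,0) = (x+θ,0)`, `θ = p/N` in lowest terms,
satisfying the twist condition on the circle. `G^t(x,y) = (x, y + h'(x)t)` is the shear
generated by a function `h` with critical points along the orbit of `x₀` and second
derivatives `ε, 0, …, 0`. Then `{(x₀ + jθ, 0)}` is an `N`-periodic orbit of `F ∘ G^t`,
and `tr D(F∘G^t)^N (x₀,0) = tr DF^N (x₀,0) + εt·∂_y[P_x∘F^N](x₀,0) = 2 + εtb`, `b > 0`. -/
theorem stmt13 (F : ℝ × ℝ → ℝ × ℝ) (θ : ℝ) (p : ℤ) (N : ℕ)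
    (hN : 1 ≤ N) (hθ : θ = (p : ℝ) / (N : ℝ)) (hcop : Int.gcd p N = 1)
    (hF : ContDiff ℝ 1 F)
    (hlift : ∀ x y : ℝ, F (x + 1, y) = F (x, y) + (1, 0))
    (harea : ∀ q : ℝ × ℝ,
      (fderiv ℝ F q (1, 0)).1 * (fderiv ℝ F q (0, 1)).2
        - (fderiv ℝ F q (1, 0)).2 * (fderiv ℝ F q (0, 1)).1 = 1)
    (hrot : ∀ x : ℝ, F (x, 0) = (x + θ, 0))
    (htwist : ∀ x : ℝ, 0 < (fderiv ℝ F (x, 0) (0, 1)).1)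
    (h : ℝ → ℝ) (hh : ContDiff ℝ (⊤ : ℕ∞) h) (hper : ∀ x, h (x + 1) = h x)
    (x₀ ε : ℝ) (hε : ε = 1 ∨ ε = -1)
    (hcrit : ∀ j : ℕ, j < N → deriv h (x₀ + (j : ℝ) * θ) = 0)
    (hh2 : iteratedDeriv 2 h x₀ = ε)
    (hh2' : ∀ j : ℕ, 1 ≤ j → j < N → iteratedDeriv 2 h (x₀ + (j : ℝ) * θ) = 0)
    (G : ℝ → ℝ × ℝ → ℝ × ℝ)
    (hG : ∀ (t : ℝ) (q : ℝ × ℝ), G t q = (q.1, q.2 + deriv h q.1 * t)) :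
    ∀ t : ℝ,
      ((F ∘ G t)^[N] (x₀, 0) = (x₀ + (p : ℝ), 0)) ∧
      (∀ j : ℕ, j < N →
        (F ∘ G t) (x₀ + (j : ℝ) * θ, 0) = (x₀ + ((j : ℝ) + 1) * θ, 0)) ∧
      (0 < (fderiv ℝ (F^[N]) (x₀, 0) (0, 1)).1) ∧
      ((fderiv ℝ (F^[N]) (x₀, 0) (1, 0)).1 + (fderiv ℝ (F^[N]) (x₀, 0) (0, 1)).2 = 2) ∧
      ((fderiv ℝ ((F ∘ G t)^[N]) (x₀, 0) (1, 0)).1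
          + (fderiv ℝ ((F ∘ G t)^[N]) (x₀, 0) (0, 1)).2
        = 2 + ε * t * (fderiv ℝ (F^[N]) (x₀, 0) (0, 1)).1) := by
  intro t
  have hNR : ((N : ℝ)) ≠ 0 := by
    have : (0:ℕ) < N := hN
    positivity
  have hNθ : (N : ℝ) * θ = (p : ℝ) := by rw [hθ]; field_simp
  have hFd : Differentiable ℝ F := hF.differentiable one_ne_zero
  -- derivatives of h
  have hhd : Differentiable ℝ (deriv h) :=
    ((contDiff_infty_iff_deriv.mp (hh.of_le (by simp))).2).differentiable (by simp)
  have hdd2 : ∀ x : ℝ, deriv (deriv h) x = iteratedDeriv 2 h x := by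
    intro x
    rw [iteratedDeriv_succ, iteratedDeriv_one]
  -- the shear derivative CLM
  set S : ℝ → (ℝ × ℝ →L[ℝ] ℝ × ℝ) := fun c =>
    (ContinuousLinearMap.fst ℝ ℝ ℝ).prod
      (ContinuousLinearMap.snd ℝ ℝ ℝ + c • ContinuousLinearMap.fst ℝ ℝ ℝ) with hS
  have hSapp : ∀ (c : ℝ) (v : ℝ × ℝ), S c v = (v.1, v.2 + c * v.1) := by
    intro c v
    simp [hS, ContinuousLinearMap.prod_apply]
  have hS0 : S 0 = ContinuousLinearMap.id ℝ (ℝ × ℝ) := by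
    ext v <;> simp [hSapp]
  -- G t has derivative S (h''(x) t) at every point
  have hGder : ∀ q : ℝ × ℝ, HasFDerivAt (G t) (S (deriv (deriv h) q.1 * t)) q := by
    intro q
    have h1 : HasFDerivAt (fun q : ℝ × ℝ => q.2 + deriv h q.1 * t)
        (ContinuousLinearMap.snd ℝ ℝ ℝ + (deriv (deriv h) q.1 * t) • ContinuousLinearMap.fst ℝ ℝ ℝ) q := by
      have h2 : HasFDerivAt (fun q : ℝ × ℝ => deriv h q.1)
          ((deriv (deriv h) q.1) • ContinuousLinearMap.fst ℝ ℝ ℝ) q :=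
        ((hhd q.1).hasDerivAt).comp_hasFDerivAt q (hasFDerivAt_fst)
      have h3 := (hasFDerivAt_snd (𝕜 := ℝ) (E := ℝ) (F := ℝ) (p := q)).add (h2.mul_const t)
      rw [smul_smul, mul_comm t] at h3
      exact h3
    have h4 := (hasFDerivAt_fst (𝕜 := ℝ) (E := ℝ) (F := ℝ) (p := q)).prodMk h1
    have : G t = fun q : ℝ × ℝ => (q.1, q.2 + deriv h q.1 * t) := funext (hG t)
    rw [this]
    exact h4
  have hGdiff : Differentiable ℝ (G t) := fun q => (hGder q).differentiableAt
  have hFGdiff : Differentiable ℝ (F ∘ G t) := hFd.comp hGdiff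
  -- G fixes critical points
  have hGfix : ∀ j : ℕ, j < N → G t (x₀ + (j : ℝ) * θ, 0) = (x₀ + (j : ℝ) * θ, 0) := by
    intro j hj
    rw [hG]
    simp [hcrit j hj]
  -- single-step orbit
  have hstep : ∀ j : ℕ, j < N →
      (F ∘ G t) (x₀ + (j : ℝ) * θ, 0) = (x₀ + ((j : ℝ) + 1) * θ, 0) := by
    intro j hj
    simp only [Function.comp_apply, hGfix j hj, hrot]
    ring_nf
  -- orbit of F ∘ G t
  have horb : ∀ n : ℕ, n ≤ N → (F ∘ G t)^[n] (x₀, 0) = (x₀ + (n : ℝ) * θ, 0) := by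
    intro n hn
    induction n with
    | zero => simp
    | succ k ih =>
      rw [Function.iterate_succ_apply', ih (le_of_lt (Nat.lt_of_succ_le hn))]
      rw [hstep k (Nat.lt_of_succ_le hn)]
      push_cast
      ring_nf
  -- orbit of F alone
  have horbF : ∀ n : ℕ, F^[n] (x₀, 0) = (x₀ + (n : ℝ) * θ, 0) := by
    intro n
    induction n with
    | zero => simp
    | succ k ih =>
      rw [Function.iterate_succ_apply', ih, hrot]
      push_cast
      ring_nf
  -- derivative of F along the circle
  have hder1 : ∀ x : ℝ, fderiv ℝ F (x, 0) (1, 0) = (1, 0) := by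
    intro x
    have hc : HasDerivAt (fun s : ℝ => ((s, (0:ℝ)) : ℝ × ℝ)) (1, 0) x :=
      (hasDerivAt_id x).prodMk (hasDerivAt_const x 0)
    have h1 : HasDerivAt (F ∘ fun s : ℝ => ((s, (0:ℝ)) : ℝ × ℝ)) (fderiv ℝ F (x, 0) (1, 0)) x :=
      (hFd (x, 0)).hasFDerivAt.comp_hasDerivAt x hc
    have h2 : HasDerivAt (fun s : ℝ => ((s + θ, (0:ℝ)) : ℝ × ℝ)) (1, 0) x :=
      ((hasDerivAt_id x).add_const θ).prodMk (hasDerivAt_const x 0)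
    have heq : (F ∘ fun s : ℝ => ((s, (0:ℝ)) : ℝ × ℝ)) = fun s : ℝ => ((s + θ, (0:ℝ)) : ℝ × ℝ) := by
      funext s; exact hrot s
    rw [heq] at h1
    exact h1.unique h2
  have hder2 : ∀ x : ℝ, (fderiv ℝ F (x, 0) (0, 1)).2 = 1 := by
    intro x
    have := harea (x, 0)
    rw [hder1 x] at this
    simpa using this
  -- action of DF at circle points on vectors (B, 1)
  have hDFvec : ∀ (x B : ℝ), fderiv ℝ F (x, 0) (B, 1)
      = (B + (fderiv ℝ F (x, 0) (0, 1)).1, 1) := by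
    intro x B
    have hv : ((B, 1) : ℝ × ℝ) = B • ((1, 0) : ℝ × ℝ) + (0, 1) := by
      simp [Prod.ext_iff]
    rw [hv, map_add, map_smul, hder1 x]
    have h2 := hder2 x
    cases' hz : fderiv ℝ F (x, 0) (0, 1) with a b
    rw [hz] at h2
    simp only at h2
    subst h2
    simp [Prod.ext_iff]
  -- inductive facts about fderiv of F^[n]
  have hind : ∀ n : ℕ,
      fderiv ℝ (F^[n]) (x₀, 0) (1, 0) = (1, 0) ∧
      (fderiv ℝ (F^[n]) (x₀, 0) (0, 1)).2 = 1 ∧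
      0 ≤ (fderiv ℝ (F^[n]) (x₀, 0) (0, 1)).1 ∧
      (1 ≤ n → 0 < (fderiv ℝ (F^[n]) (x₀, 0) (0, 1)).1) := by
    intro n
    induction n with
    | zero => simp
    | succ k ih =>
      obtain ⟨ih1, ih2, ih3, _⟩ := ih
      have hchain : fderiv ℝ (F^[k+1]) (x₀, 0)
          = (fderiv ℝ F (x₀ + (k : ℝ) * θ, 0)).comp (fderiv ℝ (F^[k]) (x₀, 0)) := by
        rw [Function.iterate_succ']
        rw [fderiv_comp _ (hFd _) ((hFd.iterate k) _)]
        rw [horbF k]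
      have hv01 : fderiv ℝ (F^[k]) (x₀, 0) (0, 1)
          = ((fderiv ℝ (F^[k]) (x₀, 0) (0, 1)).1, 1) := by
        cases' hz : fderiv ℝ (F^[k]) (x₀, 0) (0, 1) with a b
        rw [hz] at ih2
        simp at ih2 ⊢
        exact ih2
      constructor
      · rw [hchain, ContinuousLinearMap.comp_apply, ih1, hder1]
      · rw [hchain, ContinuousLinearMap.comp_apply, hv01, hDFvec]
        refine ⟨by rfl, ?_, ?_⟩
        · simpa using add_nonneg ih3 (le_of_lt (htwist (x₀ + (k : ℝ) * θ)))
        · intro _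
          simpa using add_pos_of_nonneg_of_pos ih3 (htwist (x₀ + (k : ℝ) * θ))
  obtain ⟨hA1, hA2, _, hApos⟩ := hind N
  have hBpos : 0 < (fderiv ℝ (F^[N]) (x₀, 0) (0, 1)).1 := hApos hN
  -- derivative of G t at the orbit points
  have hGd0 : fderiv ℝ (G t) (x₀, 0) = S (ε * t) := by
    have := (hGder (x₀, 0)).fderiv
    rw [this]
    congr 1
    rw [hdd2]
    simp [hh2]
  have hGdj : ∀ j : ℕ, 1 ≤ j → j < N →
      fderiv ℝ (G t) (x₀ + (j : ℝ) * θ, 0) = ContinuousLinearMap.id ℝ (ℝ × ℝ) := by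
    intro j h1 h2
    have := (hGder (x₀ + (j : ℝ) * θ, 0)).fderiv
    rw [this, hdd2]
    simp [hh2' j h1 h2, hS0]
  -- the key comparison of derivatives
  have hcomp : ∀ n : ℕ, 1 ≤ n → n ≤ N →
      fderiv ℝ ((F ∘ G t)^[n]) (x₀, 0)
        = (fderiv ℝ (F^[n]) (x₀, 0)).comp (S (ε * t)) := by
    intro n h1 h2
    induction n with
    | zero => omega
    | succ k ih =>
      rcases Nat.eq_or_lt_of_le h1 with h1' | h1'
      · -- k + 1 = 1, i.e. k = 0
        have hk : k = 0 := by omega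
        subst hk
        rw [Function.iterate_one, Function.iterate_one, fderiv_comp _ (hFd _) (hGdiff _),
          show G t (x₀, 0) = (x₀, 0) by simpa using hGfix 0 (by omega), hGd0]
      · have hk1 : 1 ≤ k := by omega
        have hkN : k < N := by omega
        have ihx := ih hk1 (by omega)
        have hchainG : fderiv ℝ ((F ∘ G t)^[k+1]) (x₀, 0)
            = (fderiv ℝ (F ∘ G t) (x₀ + (k : ℝ) * θ, 0)).comp
                (fderiv ℝ ((F ∘ G t)^[k]) (x₀, 0)) := by
          rw [Function.iterate_succ']
          rw [fderiv_comp _ (hFGdiff _) ((hFGdiff.iterate k) _)]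
          rw [horb k (le_of_lt hkN)]
        have hFG : fderiv ℝ (F ∘ G t) (x₀ + (k : ℝ) * θ, 0)
            = fderiv ℝ F (x₀ + (k : ℝ) * θ, 0) := by
          rw [fderiv_comp _ (hFd _) (hGdiff _)]
          rw [show G t (x₀ + (k : ℝ) * θ, 0) = (x₀ + (k : ℝ) * θ, 0) from hGfix k hkN]
          rw [hGdj k hk1 hkN]
          exact ContinuousLinearMap.comp_id _
        have hchainF : fderiv ℝ (F^[k+1]) (x₀, 0)
            = (fderiv ℝ F (x₀ + (k : ℝ) * θ, 0)).comp (fderiv ℝ (F^[k]) (x₀, 0)) := by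
          rw [Function.iterate_succ']
          rw [fderiv_comp _ (hFd _) ((hFd.iterate k) _)]
          rw [horbF k]
        rw [hchainG, hFG, ihx, hchainF, ContinuousLinearMap.comp_assoc]
  have hcompN := hcomp N hN le_rfl
  -- final computations
  refine ⟨?_, hstep, hBpos, ?_, ?_⟩
  · rw [horb N le_rfl, hNθ]
  · rw [hA1, hA2]
    norm_num
  · rw [hcompN]
    have e1 : S (ε * t) ((1:ℝ), (0:ℝ)) = (1, ε * t) := by rw [hSapp]; norm_num
    have e2 : S (ε * t) ((0:ℝ), (1:ℝ)) = (0, 1) := by rw [hSapp]; norm_num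
    rw [ContinuousLinearMap.comp_apply, ContinuousLinearMap.comp_apply, e1, e2]
    have hv : ((1, ε * t) : ℝ × ℝ) = (1, 0) + (ε * t) • ((0, 1) : ℝ × ℝ) := by
      simp [Prod.ext_iff]
    rw [hv, map_add, map_smul, hA1]
    cases' hz : fderiv ℝ (F^[N]) (x₀, 0) (0, 1) with a b
    rw [hz] at hA2
    simp at hA2
    subst hA2
    simp [Prod.ext_iff]
    ring
end
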